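/- For every nonnegative integer n, the reduced factor complexity of the regular paperfolding sequence satisfies ρ_f^red(8n+5) = 6. -/

import Mathlib

/-!
A binary word reduces to the alternating word fixed by its first letter and its number of
alternations, so `ρ^red(t + 1)` counts the pairs (first letter, number of alternations) over the
windows of length `t + 1`. For the paperfolding sequence `f`, the identities `f (2k) = f k`,
`f (4k + 1) = 0`, `f (4k + 3) = 1` give the number of alternations of a window of length `4t + 1`
starting at `4a + r` in closed form: `2t` for odd `r`, `2t + f a - f (a + t)` for `r = 0` and
`2t + f (2a + 2t + 1) - f (2a + 1)` for `r = 2`. Hence it always lies in `[2t - 1, 2t + 1]`, and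
for odd `t` all six pairs occur.
-/

/-- The reduction of a word: replace each maximal run of identical characters
by a single character. -/
def red {α : Type*} [DecidableEq α] (w : List α) : List α :=
  w.destutter (· ≠ ·)

/-- The length-`k` factor of the infinite sequence `x` (1-indexed) starting at
position `i`. -/
def factorAt {α : Type*} (x : ℕ → α) (i k : ℕ) : List α :=
  (List.range k).map (fun j => x (i + j))

/-- The reduced factor complexity: the number of length-`n` factors of `x`,
counted up to reduced-equivalence (`red v = red w`). -/
noncomputable def redFactorComplexity {α : Type*} [DecidableEq α]
    (x : ℕ → α) (n : ℕ) : ℕ :=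
  Set.ncard { u : List α | ∃ i ≥ 1, u = red (factorAt x i n) }

/-- The Thue–Morse sequence (1-indexed): `t n` is the parity of the number of
1's in the binary expansion of `n - 1`. -/
def thueMorse (n : ℕ) : Bool :=
  decide ((Nat.digits 2 (n - 1)).sum % 2 = 1)

/-- The number of alternations (occurrences of 01 or 10) in a binary word. -/
def alt (w : List Bool) : ℕ :=
  (List.zipWith (fun a b => a != b) w w.tail).count true

/-- The minimum number of alternations among length-`k` factors of Thue–Morse. -/
noncomputable def tmAltMin (k : ℕ) : ℕ :=
  sInf { a : ℕ | ∃ i ≥ 1, a = alt (factorAt thueMorse i k) }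

/-- The maximum number of alternations among length-`k` factors of Thue–Morse. -/
noncomputable def tmAltMax (k : ℕ) : ℕ :=
  sSup { a : ℕ | ∃ i ≥ 1, a = alt (factorAt thueMorse i k) }

/-- The Thue–Morse morphism `0 → 01`, `1 → 10`. -/
def mu (w : List Bool) : List Bool :=
  w.flatMap (fun b => if b then [true, false] else [false, true])

/-- The regular paperfolding sequence (1-indexed): writing `n = n' * 2^k` with
`n'` odd, `f n = 1` iff `n' ≡ 3 (mod 4)`. -/
def paperfold (n : ℕ) : Bool :=
  decide ((n / 2 ^ (n.factorization 2)) % 4 = 3)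

/-- The reduced abelian complexity: the number of length-`n` factors of `x`,
counted up to the equivalence identifying `v` and `w` whenever `red v` is a
rearrangement of the characters of `red w`. -/
noncomputable def redAbelianComplexity {α : Type*} [DecidableEq α]
    (x : ℕ → α) (n : ℕ) : ℕ :=
  Set.ncard { m : Multiset α | ∃ i ≥ 1, m = ↑(red (factorAt x i n)) }

def altWord : Bool → ℕ → List Bool
  | _, 0 => []
  | b, k + 1 => b :: altWord (!b) k

lemma length_altWord (b : Bool) (k : ℕ) : (altWord b k).length = k := by
  induction k generalizing b with
  | zero => rfl
  | succ k ih => simp [altWord, ih]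

lemma altWord_succ_injective :
    Function.Injective fun p : Bool × ℕ => altWord p.1 (p.2 + 1) := by
  rintro ⟨b, j⟩ ⟨c, k⟩ h
  have hlen := congrArg List.length h
  have hhead := congrArg List.head? h
  simp only [length_altWord, Nat.add_right_cancel_iff] at hlen
  simp only [altWord, List.head?_cons, Option.some.injEq] at hhead
  rw [hhead, hlen]

lemma alt_cons_cons (a b : Bool) (l : List Bool) :
    alt (a :: b :: l) = (a != b).toNat + alt (b :: l) := by
  simp only [alt, List.tail_cons, List.zipWith_cons_cons, List.count_cons]
  cases a <;> cases b <;> simp [Nat.add_comm]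

lemma destutter'_ne_eq_altWord (l : List Bool) (a : Bool) :
    l.destutter' (· ≠ ·) a = altWord a (alt (a :: l) + 1) := by
  induction l generalizing a with
  | nil => rfl
  | cons b l ih =>
    rw [alt_cons_cons]
    by_cases h : a = b
    · subst h
      simp [ih]
    · obtain rfl : b = !a := by cases a <;> cases b <;> simp_all
      rw [List.destutter'_cons_pos _ h, ih, show (a != !a).toNat = 1 by cases a <;> rfl,
        Nat.add_comm 1]
      rfl

lemma red_cons (a : Bool) (l : List Bool) : red (a :: l) = altWord a (alt (a :: l) + 1) := by
  rw [red, List.destutter_cons', destutter'_ne_eq_altWord]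

lemma factorAt_succ {α : Type*} (x : ℕ → α) (i t : ℕ) :
    factorAt x i (t + 1) = x i :: factorAt x (i + 1) t := by
  simp only [factorAt, List.range_succ_eq_map, List.map_cons, List.map_map, Nat.add_zero]
  congr 2
  funext j
  simp only [Function.comp, Nat.add_assoc, Nat.add_comm 1]

lemma redFactorComplexity_succ_eq_ncard (x : ℕ → Bool) (t : ℕ) :
    redFactorComplexity x (t + 1) =
      {p : Bool × ℕ | ∃ i ≥ 1, p = (x i, alt (factorAt x i (t + 1)))}.ncard := by
  rw [redFactorComplexity, ← Set.ncard_image_of_injective _ altWord_succ_injective]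
  congr 1
  ext u
  simp only [Set.mem_ofPred_eq, Set.mem_image]
  constructor
  · rintro ⟨i, hi, rfl⟩
    exact ⟨_, ⟨i, hi, rfl⟩, by rw [factorAt_succ, red_cons]⟩
  · rintro ⟨_, ⟨i, hi, rfl⟩, rfl⟩
    exact ⟨i, hi, by rw [factorAt_succ, red_cons]⟩

def changeCount (x : ℕ → Bool) (N : ℕ) : ℕ :=
  ∑ j ∈ Finset.range N, (x j != x (j + 1)).toNat

lemma changeCount_succ (x : ℕ → Bool) (N : ℕ) :
    changeCount x (N + 1) = changeCount x N + (x N != x (N + 1)).toNat :=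
  Finset.sum_range_succ _ _

lemma alt_factorAt_add_changeCount (x : ℕ → Bool) (i t : ℕ) :
    alt (factorAt x i (t + 1)) + changeCount x i = changeCount x (i + t) := by
  induction t generalizing i with
  | zero => simp [factorAt, alt]
  | succ t ih =>
    rw [factorAt_succ, factorAt_succ, alt_cons_cons, ← factorAt_succ,
      show i + (t + 1) = i + 1 + t by ring, ← ih (i + 1), changeCount_succ]
    ring

lemma paperfold_two_mul (k : ℕ) : paperfold (2 * k) = paperfold k := by
  rcases Nat.eq_zero_or_pos k with rfl | hk
  · rfl
  · simp only [paperfold, Nat.factorization_mul two_ne_zero hk.ne', Finsupp.add_apply,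
      Nat.Prime.factorization_self Nat.prime_two, pow_add, pow_one]
    rw [Nat.mul_div_mul_left _ _ two_pos]

lemma paperfold_of_odd {n : ℕ} (h : n % 2 = 1) : paperfold n = decide (n % 4 = 3) := by
  rw [paperfold, Nat.factorization_eq_zero_of_not_dvd (by omega), pow_zero, Nat.div_one]

lemma paperfold_two_mul_add_one (k : ℕ) : paperfold (2 * k + 1) = decide (k % 2 = 1) := by
  rw [paperfold_of_odd (by omega)]
  exact decide_eq_decide.mpr (by omega)

lemma paperfold_four_mul_add_one (k : ℕ) : paperfold (4 * k + 1) = false := by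
  rw [show 4 * k + 1 = 2 * (2 * k) + 1 by ring, paperfold_two_mul_add_one]
  simp

lemma paperfold_four_mul_add_three (k : ℕ) : paperfold (4 * k + 3) = true := by
  rw [show 4 * k + 3 = 2 * (2 * k + 1) + 1 by ring, paperfold_two_mul_add_one]
  simp

lemma paperfold_four_mul (k : ℕ) : paperfold (4 * k) = paperfold k := by
  rw [show 4 * k = 2 * (2 * k) by ring, paperfold_two_mul, paperfold_two_mul]

lemma changeCount_paperfold_four_mul (k : ℕ) :
    changeCount paperfold (4 * k) + (paperfold k).toNat = 2 * k := by
  induction k with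
  | zero => rfl
  | succ k ih =>
    have h1 : paperfold (4 * k + 2) = paperfold (2 * k + 1) := by
      rw [show 4 * k + 2 = 2 * (2 * k + 1) by ring, paperfold_two_mul]
    have h2 : paperfold (4 * k + 4) = paperfold (k + 1) := by
      rw [show 4 * k + 4 = 4 * (k + 1) by ring, paperfold_four_mul]
    rw [show 4 * (k + 1) = 4 * k + 1 + 1 + 1 + 1 by ring]
    simp only [changeCount_succ, Nat.add_assoc, Nat.reduceAdd, paperfold_four_mul,
      paperfold_four_mul_add_one, h1, paperfold_four_mul_add_three, h2, Bool.bne_false,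
      Bool.false_bne, Bool.bne_true, Bool.true_bne]
    cases paperfold (2 * k + 1) <;> cases paperfold (k + 1) <;>
      simp only [Bool.not_true, Bool.not_false, Bool.toNat_true, Bool.toNat_false] <;> omega

lemma changeCount_paperfold_four_mul_add_one (k : ℕ) :
    changeCount paperfold (4 * k + 1) = 2 * k := by
  rw [changeCount_succ, paperfold_four_mul, paperfold_four_mul_add_one, Bool.bne_false,
    changeCount_paperfold_four_mul]

lemma changeCount_paperfold_four_mul_add_two (k : ℕ) :
    changeCount paperfold (4 * k + 2) = 2 * k + (paperfold (2 * k + 1)).toNat := by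
  rw [changeCount_succ, changeCount_paperfold_four_mul_add_one, paperfold_four_mul_add_one,
    show 4 * k + 1 + 1 = 2 * (2 * k + 1) by ring, paperfold_two_mul, Bool.false_bne]

lemma changeCount_paperfold_four_mul_add_three (k : ℕ) :
    changeCount paperfold (4 * k + 3) = 2 * k + 1 := by
  rw [changeCount_succ, changeCount_paperfold_four_mul_add_two,
    show 4 * k + 2 + 1 = 4 * k + 3 from rfl, paperfold_four_mul_add_three,
    show 4 * k + 2 = 2 * (2 * k + 1) by ring, paperfold_two_mul]
  cases paperfold (2 * k + 1) <;> rfl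

lemma alt_factorAt_paperfold_four_mul (a t : ℕ) :
    alt (factorAt paperfold (4 * a) (4 * t + 1)) + (paperfold (a + t)).toNat =
      2 * t + (paperfold a).toNat := by
  have hwin := alt_factorAt_add_changeCount paperfold (4 * a) (4 * t)
  rw [show 4 * a + 4 * t = 4 * (a + t) by ring] at hwin
  have := changeCount_paperfold_four_mul a
  have := changeCount_paperfold_four_mul (a + t)
  omega

lemma alt_factorAt_paperfold_four_mul_add_one (a t : ℕ) :
    alt (factorAt paperfold (4 * a + 1) (4 * t + 1)) = 2 * t := by
  have hwin := alt_factorAt_add_changeCount paperfold (4 * a + 1) (4 * t)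
  rw [show 4 * a + 1 + 4 * t = 4 * (a + t) + 1 by ring, changeCount_paperfold_four_mul_add_one,
    changeCount_paperfold_four_mul_add_one] at hwin
  omega

lemma alt_factorAt_paperfold_four_mul_add_two (a t : ℕ) :
    alt (factorAt paperfold (4 * a + 2) (4 * t + 1)) + (paperfold (2 * a + 1)).toNat =
      2 * t + (paperfold (2 * (a + t) + 1)).toNat := by
  have hwin := alt_factorAt_add_changeCount paperfold (4 * a + 2) (4 * t)
  rw [show 4 * a + 2 + 4 * t = 4 * (a + t) + 2 by ring, changeCount_paperfold_four_mul_add_two,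
    changeCount_paperfold_four_mul_add_two] at hwin
  omega

lemma alt_factorAt_paperfold_four_mul_add_three (a t : ℕ) :
    alt (factorAt paperfold (4 * a + 3) (4 * t + 1)) = 2 * t := by
  have hwin := alt_factorAt_add_changeCount paperfold (4 * a + 3) (4 * t)
  rw [show 4 * a + 3 + 4 * t = 4 * (a + t) + 3 by ring, changeCount_paperfold_four_mul_add_three,
    changeCount_paperfold_four_mul_add_three] at hwin
  omega

lemma alt_factorAt_paperfold_mem_Icc (i t : ℕ) :
    alt (factorAt paperfold i (4 * t + 1)) ∈ Set.Icc (2 * t - 1) (2 * t + 1) := by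
  obtain ⟨a, r, hr, rfl⟩ : ∃ a r, r < 4 ∧ i = 4 * a + r := ⟨i / 4, i % 4, by omega, by omega⟩
  rw [Set.mem_Icc]
  interval_cases r
  · rw [Nat.add_zero]
    have := alt_factorAt_paperfold_four_mul a t
    have := Bool.toNat_le (paperfold a)
    have := Bool.toNat_le (paperfold (a + t))
    omega
  · have := alt_factorAt_paperfold_four_mul_add_one a t
    omega
  · have := alt_factorAt_paperfold_four_mul_add_two a t
    have := Bool.toNat_le (paperfold (2 * a + 1))
    have := Bool.toNat_le (paperfold (2 * (a + t) + 1))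
    omega
  · have := alt_factorAt_paperfold_four_mul_add_three a t
    omega

lemma paperfold_three_mul {m : ℕ} (hm : Odd m) : paperfold (3 * m) = !paperfold m := by
  have hm2 := Nat.odd_iff.mp hm
  rw [paperfold_of_odd (by omega), paperfold_of_odd hm2]
  grind

lemma paperfold_five_mul {m : ℕ} (hm : Odd m) : paperfold (5 * m) = paperfold m := by
  have hm2 := Nat.odd_iff.mp hm
  rw [paperfold_of_odd (by omega), paperfold_of_odd hm2]
  grind

lemma exists_paperfold_window_odd_start (b : Bool) (m : ℕ) :
    ∃ i ≥ 1, paperfold i = b ∧ alt (factorAt paperfold i (4 * m + 1)) = 2 * m := by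
  cases b
  · exact ⟨4 * 0 + 1, le_rfl, paperfold_four_mul_add_one 0,
      alt_factorAt_paperfold_four_mul_add_one 0 m⟩
  · exact ⟨4 * 0 + 3, by norm_num, paperfold_four_mul_add_three 0,
      alt_factorAt_paperfold_four_mul_add_three 0 m⟩

lemma exists_paperfold_window_two_mod_four {m : ℕ} (hm : Odd m) (b : Bool) :
    ∃ i ≥ 1, paperfold i = b ∧
      alt (factorAt paperfold i (4 * m + 1)) + b.toNat = 2 * m + (!b).toNat := by
  have hp1 : paperfold (2 * 0 + 1) = false := paperfold_four_mul_add_one 0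
  have hp3 : paperfold (2 * 1 + 1) = true := paperfold_four_mul_add_three 0
  cases b
  · refine ⟨4 * 0 + 2, by norm_num, by rw [show 4 * 0 + 2 = 2 * 1 from rfl, paperfold_two_mul,
      ← hp1], ?_⟩
    have hodd : paperfold (2 * (0 + m) + 1) = true := by
      rw [paperfold_two_mul_add_one, decide_eq_true_eq, Nat.zero_add, ← Nat.odd_iff]
      exact hm
    have h := alt_factorAt_paperfold_four_mul_add_two 0 m
    rwa [hp1, hodd] at h
  · refine ⟨4 * 1 + 2, by norm_num, by rw [show 4 * 1 + 2 = 2 * 3 from rfl, paperfold_two_mul,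
      ← hp3], ?_⟩
    have heven : paperfold (2 * (1 + m) + 1) = false := by
      rw [paperfold_two_mul_add_one, decide_eq_false_iff_not, Nat.add_comm, ← Nat.odd_iff,
        Nat.odd_add_one, not_not]
      exact hm
    have h := alt_factorAt_paperfold_four_mul_add_two 1 m
    rwa [hp3, heven] at h

/-- Since `paperfold (3 * m) = !paperfold m` and `paperfold (5 * m) = paperfold m`, the windows
at `12 * m` and `20 * m` both serve, one for each first letter. -/
lemma exists_paperfold_window_zero_mod_four {m : ℕ} (hm : Odd m) (b : Bool) :
    ∃ i ≥ 1, paperfold i = b ∧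
      alt (factorAt paperfold i (4 * m + 1)) + (!b).toNat = 2 * m + b.toNat := by
  have hpos : 1 ≤ m := hm.pos
  by_cases hb : paperfold m = b
  · refine ⟨4 * (5 * m), by omega, by rw [paperfold_four_mul, paperfold_five_mul hm, hb], ?_⟩
    have h := alt_factorAt_paperfold_four_mul (5 * m) m
    rwa [show 5 * m + m = 2 * (3 * m) by ring, paperfold_two_mul, paperfold_three_mul hm,
      paperfold_five_mul hm, hb] at h
  · obtain rfl : b = !paperfold m := by cases b <;> simp_all
    refine ⟨4 * (3 * m), by omega, by rw [paperfold_four_mul, paperfold_three_mul hm], ?_⟩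
    have h := alt_factorAt_paperfold_four_mul (3 * m) m
    rw [Bool.not_not]
    rwa [show 3 * m + m = 4 * m by ring, paperfold_four_mul, paperfold_three_mul hm] at h

lemma exists_paperfold_window {m : ℕ} (hm : Odd m) (b : Bool) {k : ℕ}
    (hk : k ∈ Set.Icc (2 * m - 1) (2 * m + 1)) :
    ∃ i ≥ 1, paperfold i = b ∧ alt (factorAt paperfold i (4 * m + 1)) = k := by
  obtain rfl | rfl | rfl : k = 2 * m - 1 ∨ k = 2 * m ∨ k = 2 * m + 1 := by
    rw [Set.mem_Icc] at hk
    omega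
  · cases b
    · obtain ⟨i, hi, hb, h⟩ := exists_paperfold_window_zero_mod_four hm false
      exact ⟨i, hi, hb, by simp only [Bool.not_false, Bool.toNat_true, Bool.toNat_false] at h; omega⟩
    · obtain ⟨i, hi, hb, h⟩ := exists_paperfold_window_two_mod_four hm true
      exact ⟨i, hi, hb, by simp only [Bool.not_true, Bool.toNat_true, Bool.toNat_false] at h; omega⟩
  · exact exists_paperfold_window_odd_start b m
  · cases b
    · obtain ⟨i, hi, hb, h⟩ := exists_paperfold_window_two_mod_four hm false
      exact ⟨i, hi, hb, by simp only [Bool.not_false, Bool.toNat_true, Bool.toNat_false] at h; omega⟩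
    · obtain ⟨i, hi, hb, h⟩ := exists_paperfold_window_zero_mod_four hm true
      exact ⟨i, hi, hb, by simp only [Bool.not_true, Bool.toNat_true, Bool.toNat_false] at h; omega⟩

lemma paperfold_windows_eq {m : ℕ} (hm : Odd m) :
    {p : Bool × ℕ | ∃ i ≥ 1, p = (paperfold i, alt (factorAt paperfold i (4 * m + 1)))} =
      Set.univ ×ˢ Set.Icc (2 * m - 1) (2 * m + 1) := by
  ext ⟨b, k⟩
  simp only [Set.mem_ofPred_eq, Set.mem_prod, Set.mem_univ, true_and, Prod.mk.injEq]
  constructor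
  · rintro ⟨i, -, rfl, rfl⟩
    exact alt_factorAt_paperfold_mem_Icc i m
  · intro hk
    obtain ⟨i, hi, rfl, rfl⟩ := exists_paperfold_window hm b hk
    exact ⟨i, hi, rfl, rfl⟩

theorem stmt16 (n : ℕ) :
    redFactorComplexity paperfold (8 * n + 5) = 6 := by
  have hm : Odd (2 * n + 1) := odd_two_mul_add_one n
  rw [show 8 * n + 5 = 4 * (2 * n + 1) + 1 by ring, redFactorComplexity_succ_eq_ncard,
    paperfold_windows_eq hm, Set.ncard_prod, Set.ncard_univ, Nat.card_eq_fintype_card,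
    Fintype.card_bool, Set.ncard_Icc_nat]
  omega
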